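/- Let v be the vertex sequence of a walk ⟨f | g⟩_m and let R ≥ 1 satisfy f(n + R) ≡ f(n) (mod m) and g(n + R) = g(n) for all n ≥ 1. If v(R) ≠ 0, then the walk is unbounded: for every real B there exists n with |v(n)| > B (indeed |v(R·k)| = k·|v(R)| → ∞). -/

import Mathlib

open Complex Finset

/-! Since `exp (2πi a / m)` depends only on `a mod m`, the steps of the walk are `R`-periodic, so
every block of `R` consecutive steps has the same displacement `v R` and `v (R k) = k • v R`. -/

theorem Function.Periodic.sum_range_mul {M : Type*} [AddCommMonoid M] {u : ℕ → M} {R : ℕ}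
    (hu : Function.Periodic u R) (k : ℕ) :
    ∑ t ∈ range (R * k), u t = k • ∑ t ∈ range R, u t := by
  induction k with
  | zero => simp
  | succ k ih =>
    rw [mul_add_one, sum_range_add, ih, succ_nsmul]
    congr 1
    refine sum_congr rfl fun t _ => ?_
    rw [add_comm, mul_comm]
    exact hu.nat_mul k t

theorem Finset.sum_Icc_one_eq_sum_range {M : Type*} [AddCommMonoid M] (u : ℕ → M) (n : ℕ) :
    ∑ t ∈ Icc 1 n, u t = ∑ t ∈ range n, u (t + 1) := by
  rw [range_eq_Ico, sum_Ico_add', zero_add, Ico_add_one_right_eq_Icc]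

theorem Complex.exp_two_pi_I_mul_div_eq_pow (a m : ℕ) :
    exp (2 * (Real.pi : ℂ) * I * a / m) = exp (2 * (Real.pi : ℂ) * I / m) ^ a := by
  rw [← exp_nat_mul]
  ring_nf

theorem Complex.exp_two_pi_I_div_pow_self (m : ℕ) : exp (2 * (Real.pi : ℂ) * I / m) ^ m = 1 := by
  rcases eq_or_ne m 0 with rfl | hm
  · simp
  · rw [← exp_nat_mul, mul_div_cancel₀ _ (Nat.cast_ne_zero.2 hm), exp_two_pi_mul_I]

theorem Complex.exp_two_pi_I_mul_div_eq_of_mod_eq {a b m : ℕ} (h : a % m = b % m) :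
    exp (2 * (Real.pi : ℂ) * I * a / m) = exp (2 * (Real.pi : ℂ) * I * b / m) := by
  rw [exp_two_pi_I_mul_div_eq_pow, exp_two_pi_I_mul_div_eq_pow,
    pow_eq_pow_mod a (exp_two_pi_I_div_pow_self m), pow_eq_pow_mod b (exp_two_pi_I_div_pow_self m),
    h]

theorem stmt_5_general (f : ℕ → ℕ) (g : ℕ → ℝ) (m : ℕ) (v : ℕ → ℂ)
    (hv : ∀ n, v n = ∑ t ∈ Finset.Icc 1 n,
      (g t : ℂ) * Complex.exp (2 * (Real.pi : ℂ) * Complex.I * (f t : ℂ) / (m : ℂ)))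
    (R : ℕ)
    (hf : ∀ n, 1 ≤ n → f (n + R) % m = f n % m)
    (hg : ∀ n, 1 ≤ n → g (n + R) = g n)
    (hvR : v R ≠ 0) :
    (∀ k : ℕ, ‖v (R * k)‖ = (k : ℝ) * ‖v R‖) ∧
    (∀ B : ℝ, ∃ n, B < ‖v n‖) := by
  have hstep : Function.Periodic (fun t => (g (t + 1) : ℂ) *
      exp (2 * (Real.pi : ℂ) * I * (f (t + 1) : ℂ) / (m : ℂ))) R := fun t => by
    simp only [add_right_comm t R 1, hg (t + 1) le_add_self,
      exp_two_pi_I_mul_div_eq_of_mod_eq (hf (t + 1) le_add_self)]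
  have hnorm (k : ℕ) : ‖v (R * k)‖ = k * ‖v R‖ := by
    rw [hv, hv, sum_Icc_one_eq_sum_range, sum_Icc_one_eq_sum_range, hstep.sum_range_mul,
      nsmul_eq_mul, norm_mul, norm_natCast]
  refine ⟨hnorm, fun B => ?_⟩
  obtain ⟨k, hk⟩ := exists_nat_gt (B / ‖v R‖)
  exact ⟨R * k, by rwa [hnorm, ← div_lt_iff₀ (norm_pos_iff.2 hvR)]⟩

/-- If `f` is `R`-periodic modulo `m` and `g` is `R`-periodic (for `n ≥ 1`), and
`v(R) ≠ 0`, then the walk `⟨f | g⟩_m` is unbounded: indeed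
`|v(Rk)| = k·|v(R)| → ∞`, so for every `B` some vertex satisfies `|v(n)| > B`. -/
theorem stmt_5 (f : ℕ → ℕ) (g : ℕ → ℝ) (m : ℕ) (hm : 1 ≤ m) (v : ℕ → ℂ)
    (hv : ∀ n, v n = ∑ t ∈ Finset.Icc 1 n,
      (g t : ℂ) * Complex.exp (2 * (Real.pi : ℂ) * Complex.I * (f t : ℂ) / (m : ℂ)))
    (R : ℕ) (hR : 1 ≤ R)
    (hf : ∀ n, 1 ≤ n → f (n + R) % m = f n % m)
    (hg : ∀ n, 1 ≤ n → g (n + R) = g n)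
    (hvR : v R ≠ 0) :
    (∀ k : ℕ, ‖v (R * k)‖ = (k : ℝ) * ‖v R‖) ∧
    (∀ B : ℝ, ∃ n, B < ‖v n‖) :=
  stmt_5_general f g m v hv R hf hg hvR
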